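/- Suppose there exist unit vectors U ∈ H₁(1) and W ∈ H₁(−1) such that for each a ∈ {2, 3}, ⟨φ_a Z, Y⟩ = 0 for all Z ∈ H₁(1) orthogonal to U and all Y ∈ H₁(−1) orthogonal to W. Then dim H₁(1) = dim H₁(−1) = 2; more precisely H₁(1) = span{U, φU} and H₁(−1) = span{W, φW}. -/

import Mathlib

open RealInnerProductSpace

/-- An almost contact metric structure `(φ, ξ, η)` together with an almost contact metric
3-structure `(φ_a, ξ_a, η_a)`, `a ∈ {1,2,3}` (indices mod 3), on a real inner product space `V`,
modelling the structures induced on the tangent space of a real hypersurface in the complex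
two-plane Grassmannian `G₂(ℂ^{m+2})` by the Kaehler structure `J` and the quaternionic Kaehler
structure `𝔍`.  Here `η(X) = ⟪ξ, X⟫` and `η_a(X) = ⟪ξ_a, X⟫` are written out via the inner
product. -/
structure ACMS3 (V : Type*) [NormedAddCommGroup V] [InnerProductSpace ℝ V] where
  phi : V →ₗ[ℝ] V
  xi : V
  phiA : Fin 3 → V →ₗ[ℝ] V
  xiA : Fin 3 → V
  xi_unit : ‖xi‖ = 1
  phi_sq : ∀ X : V, phi (phi X) = -X + ⟪xi, X⟫ • xi
  phi_xi : phi xi = 0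
  phi_metric : ∀ X Y : V, ⟪phi X, phi Y⟫ = ⟪X, Y⟫ - ⟪xi, X⟫ * ⟪xi, Y⟫
  xiA_unit : ∀ a, ‖xiA a‖ = 1
  phiA_sq : ∀ a (X : V), phiA a (phiA a X) = -X + ⟪xiA a, X⟫ • xiA a
  phiA_xiA : ∀ a, phiA a (xiA a) = 0
  phiA_metric : ∀ a (X Y : V),
    ⟪phiA a X, phiA a Y⟫ = ⟪X, Y⟫ - ⟪xiA a, X⟫ * ⟪xiA a, Y⟫
  quat1 : ∀ a (X : V), phiA a (phiA (a + 1) X) - ⟪xiA (a + 1), X⟫ • xiA a = phiA (a + 2) X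
  quat2 : ∀ a (X : V),
    phiA (a + 2) X = -(phiA (a + 1) (phiA a X)) + ⟪xiA a, X⟫ • xiA (a + 1)
  quat_xi1 : ∀ a, phiA a (xiA (a + 1)) = xiA (a + 2)
  quat_xi2 : ∀ a, xiA (a + 2) = -(phiA (a + 1) (xiA a))
  rel : ∀ a (X : V), phiA a (phi X) - ⟪xi, X⟫ • xiA a = phi (phiA a X) - ⟪xiA a, X⟫ • xi
  rel_xi : ∀ a, phi (xiA a) = phiA a xi

variable {V : Type*} [NormedAddCommGroup V] [InnerProductSpace ℝ V]

/-- The endomorphism `θ_a X := φ_a φ X − η(X) ξ_a`. -/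
noncomputable def ACMS3.theta (S : ACMS3 V) (a : Fin 3) : V →ₗ[ℝ] V where
  toFun X := S.phiA a (S.phi X) - ⟪S.xi, X⟫ • S.xiA a
  map_add' X Y := by
    simp only [map_add, inner_add_right, add_smul]
    abel
  map_smul' r X := by
    simp only [map_smul, inner_smul_right, RingHom.id_apply, smul_sub, smul_smul]

/-- `H^⊥ = span{ξ, ξ₁, ξ₂, ξ₃, φξ₁, φξ₂, φξ₃}`. -/
noncomputable def ACMS3.Hperp (S : ACMS3 V) : Submodule ℝ V :=
  Submodule.span ℝ {S.xi, S.xiA 0, S.xiA 1, S.xiA 2,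
    S.phi (S.xiA 0), S.phi (S.xiA 1), S.phi (S.xiA 2)}

/-- `H` is the orthogonal complement of `H^⊥` in `V`. -/
noncomputable def ACMS3.H (S : ACMS3 V) : Submodule ℝ V := S.Hperpᗮ

/-- `H_a(ε)`, the eigenspace of `θ_a` restricted to `H` corresponding to the eigenvalue `ε`. -/
noncomputable def ACMS3.eigenH (S : ACMS3 V) (a : Fin 3) (ε : ℝ) : Submodule ℝ V :=
  S.H ⊓ Module.End.eigenspace (S.theta a) ε

/-- The normal Jacobi operator
`R̂_N X = X + 3η(X)ξ + Σ_a (3η_a(X)ξ_a − η(ξ_a)θ_a X + η_a(φX)φξ_a)`. -/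
noncomputable def ACMS3.jacobi (S : ACMS3 V) (X : V) : V :=
  X + (3 * ⟪S.xi, X⟫) • S.xi +
    ∑ a : Fin 3, ((3 * ⟪S.xiA a, X⟫) • S.xiA a
      - ⟪S.xi, S.xiA a⟫ • S.theta a X
      + ⟪S.xiA a, S.phi X⟫ • S.phi (S.xiA a))

/-!
On `H` the endomorphism `θ_a = φ_a φ` commutes with `φ` and anticommutes with `φ_{a+1}`, so `φ`
preserves each `H_a(±1)` while `φ_{a+1}` swaps them (the paper's `φ_a` is `S.phiA (a - 1)`).
If `Z ∈ H₁(1)` is orthogonal to `U` and `φU`, the hypothesis puts both `φ₂ Z` and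
`φ₂ φ Z = φ φ₂ Z` on the line `ℝW`; as `φW ⟂ W` this forces `φ₂ Z = 0`, hence `Z = 0`. So the
orthonormal pair `U, φU` spans `H₁(1)`, and, `φ₂` being skew, `W, φW` spans `H₁(−1)` likewise.
-/

open Submodule

section OrthonormalPair

theorem eq_inner_smul_of_forall_inner_eq_zero {N : Submodule ℝ V} {w v : V} (hw : w ∈ N)
    (hww : ⟪w, w⟫ = 1) (hv : v ∈ N) (h : ∀ y ∈ N, ⟪y, w⟫ = 0 → ⟪v, y⟫ = 0) :
    v = ⟪v, w⟫ • w := by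
  set y := v - ⟪v, w⟫ • w
  have hyw : ⟪y, w⟫ = 0 := by
    rw [inner_sub_left, real_inner_smul_left, hww, mul_one, sub_self]
  have hyy : ⟪y, y⟫ = 0 := by
    calc ⟪y, y⟫ = ⟪v, y⟫ - ⟪v, w⟫ * ⟪y, w⟫ := by
          rw [inner_sub_left, real_inner_smul_left, real_inner_comm y w]
      _ = 0 := by rw [h y (N.sub_mem hv (N.smul_mem _ hw)) hyw, hyw, mul_zero, sub_zero]
  exact sub_eq_zero.mp (inner_self_eq_zero.mp hyy)

variable {u v : V}

theorem eq_span_pair_of_forall_inner_eq_zero {N : Submodule ℝ V} (hu : u ∈ N) (hv : v ∈ N)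
    (huu : ⟪u, u⟫ = 1) (hvv : ⟪v, v⟫ = 1) (huv : ⟪u, v⟫ = 0)
    (h : ∀ z ∈ N, ⟪z, u⟫ = 0 → ⟪z, v⟫ = 0 → z = 0) : N = span ℝ {u, v} := by
  refine le_antisymm (fun z hz => ?_) (span_le.mpr (Set.insert_subset hu (by simpa using hv)))
  have hr : z - ⟪z, u⟫ • u - ⟪z, v⟫ • v = 0 :=
    h _ (N.sub_mem (N.sub_mem hz (N.smul_mem _ hu)) (N.smul_mem _ hv))
      (by rw [inner_sub_left, inner_sub_left, real_inner_smul_left, real_inner_smul_left, huu,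
        real_inner_comm u v, huv]; ring)
      (by rw [inner_sub_left, inner_sub_left, real_inner_smul_left, real_inner_smul_left, hvv,
        huv]; ring)
  rw [sub_sub, sub_eq_zero] at hr
  exact mem_span_pair.mpr ⟨⟪z, u⟫, ⟪z, v⟫, hr.symm⟩

theorem finrank_span_pair_eq_two (huu : ⟪u, u⟫ = 1) (hvv : ⟪v, v⟫ = 1)
    (huv : ⟪u, v⟫ = 0) : Module.finrank ℝ (span ℝ {u, v}) = 2 := by
  have hli : LinearIndependent ℝ ![u, v] := by
    rw [LinearIndependent.pair_iff]
    intro s t hst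
    have hs := congrArg (⟪·, u⟫) hst
    have ht := congrArg (⟪·, v⟫) hst
    simp only [inner_add_left, real_inner_smul_left, huu, hvv, huv, real_inner_comm u v,
      inner_zero_left] at hs ht
    constructor <;> linarith
  rw [← Matrix.range_cons_cons_empty u v ![], finrank_span_eq_card hli, Fintype.card_fin]

end OrthonormalPair

structure IsAlmostContactMetric (f : V →ₗ[ℝ] V) (ξ : V) : Prop where
  norm_eq_one : ‖ξ‖ = 1
  apply_apply : ∀ X, f (f X) = -X + ⟪ξ, X⟫ • ξ
  apply_eq_zero : f ξ = 0
  inner_apply_apply : ∀ X Y, ⟪f X, f Y⟫ = ⟪X, Y⟫ - ⟪ξ, X⟫ * ⟪ξ, Y⟫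

namespace IsAlmostContactMetric

variable {f : V →ₗ[ℝ] V} {ξ : V}

theorem inner_xi_apply (hf : IsAlmostContactMetric f ξ) (X : V) : ⟪ξ, f X⟫ = 0 := by
  have hξξ : ⟪ξ, ξ⟫ = 1 := by rw [real_inner_self_eq_norm_sq, hf.norm_eq_one, one_pow]
  have h2 : ∀ Y, ⟪ξ, f (f Y)⟫ = 0 := fun Y => by
    rw [hf.apply_apply, inner_add_right, inner_neg_right, real_inner_smul_right, hξξ]; ring
  have h3 : f (f (f X)) = -f X := by
    rw [hf.apply_apply X, map_add, map_neg, map_smul, hf.apply_eq_zero, smul_zero, add_zero]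
  have := h2 (f X)
  rwa [h3, inner_neg_right, neg_eq_zero] at this

theorem inner_apply_left (hf : IsAlmostContactMetric f ξ) (X Y : V) :
    ⟪f X, Y⟫ = -⟪X, f Y⟫ := by
  have h := hf.inner_apply_apply X (f Y)
  rw [hf.apply_apply, inner_add_right, inner_neg_right, real_inner_smul_right,
    real_inner_comm ξ, hf.inner_xi_apply, hf.inner_xi_apply] at h
  linarith

theorem inner_self_apply (hf : IsAlmostContactMetric f ξ) (X : V) : ⟪X, f X⟫ = 0 := by
  linarith [hf.inner_apply_left X X, real_inner_comm X (f X)]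

theorem inner_apply_self_apply (hf : IsAlmostContactMetric f ξ) {X : V} (hX : ⟪ξ, X⟫ = 0) :
    ⟪f X, f X⟫ = ⟪X, X⟫ := by
  rw [hf.inner_apply_apply, hX, zero_mul, sub_zero]

theorem eq_zero_of_apply_eq_zero (hf : IsAlmostContactMetric f ξ) {X : V} (hX : ⟪ξ, X⟫ = 0)
    (h0 : f X = 0) : X = 0 := by
  rw [← inner_self_eq_zero (𝕜 := ℝ), ← hf.inner_apply_self_apply hX, h0, inner_zero_left]

end IsAlmostContactMetric

namespace ACMS3

variable (S : ACMS3 V)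

theorem isAlmostContactMetric_phi : IsAlmostContactMetric S.phi S.xi :=
  ⟨S.xi_unit, S.phi_sq, S.phi_xi, S.phi_metric⟩

theorem isAlmostContactMetric_phiA (a : Fin 3) : IsAlmostContactMetric (S.phiA a) (S.xiA a) :=
  ⟨S.xiA_unit a, S.phiA_sq a, S.phiA_xiA a, S.phiA_metric a⟩

theorem exists_phiA_xiA_eq_smul (a b : Fin 3) :
    ∃ c : Fin 3, ∃ r : ℝ, S.phiA a (S.xiA b) = r • S.xiA c := by
  obtain rfl | rfl | rfl : b = a ∨ b = a + 1 ∨ b = a + 2 := by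
    fin_cases a <;> fin_cases b <;> decide
  · exact ⟨0, 0, by rw [S.phiA_xiA, zero_smul]⟩
  · exact ⟨a + 2, 1, by rw [S.quat_xi1, one_smul]⟩
  · refine ⟨a + 1, -1, ?_⟩
    have h := S.quat_xi2 (a + 2)
    rw [show a + 2 + 2 = a + 1 by fin_cases a <;> rfl,
      show a + 2 + 1 = a by fin_cases a <;> rfl] at h
    rw [h, neg_one_smul, neg_neg]

theorem mem_H_iff {x : V} : x ∈ S.H ↔
    ⟪S.xi, x⟫ = 0 ∧ (∀ a, ⟪S.xiA a, x⟫ = 0) ∧ ∀ a, ⟪S.phi (S.xiA a), x⟫ = 0 := by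
  rw [H, Hperp, ← span_singleton_le_iff_mem, ← isOrtho_iff_le, isOrtho_comm, isOrtho_span]
  simp [Fin.forall_fin_succ, and_assoc]

theorem phi_mem_H {x : V} (hx : x ∈ S.H) : S.phi x ∈ S.H := by
  obtain ⟨hξ, hξA, hφξA⟩ := S.mem_H_iff.1 hx
  have hφ := S.isAlmostContactMetric_phi
  refine S.mem_H_iff.2 ⟨hφ.inner_xi_apply x, fun b => ?_, fun b => ?_⟩
  · rw [← neg_eq_zero, ← hφ.inner_apply_left, hφξA]
  · simp [hφ.inner_apply_apply, hξ, hξA]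

theorem phiA_mem_H (a : Fin 3) {x : V} (hx : x ∈ S.H) : S.phiA a x ∈ S.H := by
  obtain ⟨hξ, hξA, hφξA⟩ := S.mem_H_iff.1 hx
  have hA := S.isAlmostContactMetric_phiA a
  refine S.mem_H_iff.2 ⟨?_, fun b => ?_, fun b => ?_⟩ <;>
    rw [← neg_eq_zero, ← hA.inner_apply_left]
  · rw [← S.rel_xi, hφξA]
  all_goals obtain ⟨c, r, hc⟩ := S.exists_phiA_xiA_eq_smul a b
  · rw [hc, real_inner_smul_left, hξA, mul_zero]
  · have h : S.phiA a (S.phi (S.xiA b)) =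
        r • S.phi (S.xiA c) - ⟪S.xiA a, S.xiA b⟫ • S.xi + ⟪S.xi, S.xiA b⟫ • S.xiA a := by
      rw [← map_smul, ← hc, ← S.rel a]
      abel
    simp [h, inner_add_left, inner_sub_left, real_inner_smul_left, hξ, hξA, hφξA]

theorem theta_apply_of_mem_H (a : Fin 3) {x : V} (hx : x ∈ S.H) :
    S.theta a x = S.phiA a (S.phi x) := by
  simp [theta, (S.mem_H_iff.1 hx).1]

theorem phi_phiA_of_mem_H (a : Fin 3) {x : V} (hx : x ∈ S.H) :
    S.phi (S.phiA a x) = S.phiA a (S.phi x) := by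
  obtain ⟨hξ, hξA, -⟩ := S.mem_H_iff.1 hx
  simpa [hξ, hξA] using (S.rel a x).symm

theorem theta_phi_of_mem_H (a : Fin 3) {x : V} (hx : x ∈ S.H) :
    S.theta a (S.phi x) = S.phi (S.theta a x) := by
  rw [S.theta_apply_of_mem_H a (S.phi_mem_H hx), S.theta_apply_of_mem_H a hx,
    S.phi_phiA_of_mem_H a (S.phi_mem_H hx)]

theorem theta_phiA_succ_of_mem_H (a : Fin 3) {x : V} (hx : x ∈ S.H) :
    S.theta a (S.phiA (a + 1) x) = -S.phiA (a + 1) (S.theta a x) := by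
  obtain ⟨-, hξA, -⟩ := S.mem_H_iff.1 (S.phi_mem_H hx)
  have h1 := S.quat1 a (S.phi x)
  have h2 := S.quat2 a (S.phi x)
  rw [hξA, zero_smul, sub_zero] at h1
  rw [hξA, zero_smul, add_zero] at h2
  rw [S.theta_apply_of_mem_H a (S.phiA_mem_H _ hx), S.theta_apply_of_mem_H a hx,
    S.phi_phiA_of_mem_H _ hx, h1, h2]

theorem mem_eigenH_iff {a : Fin 3} {ε : ℝ} {x : V} :
    x ∈ S.eigenH a ε ↔ x ∈ S.H ∧ S.theta a x = ε • x := by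
  rw [eigenH, mem_inf, Module.End.mem_eigenspace_iff]

theorem phi_mem_eigenH {a : Fin 3} {ε : ℝ} {x : V} (hx : x ∈ S.eigenH a ε) :
    S.phi x ∈ S.eigenH a ε := by
  obtain ⟨hxH, hθ⟩ := S.mem_eigenH_iff.1 hx
  exact S.mem_eigenH_iff.2 ⟨S.phi_mem_H hxH, by rw [S.theta_phi_of_mem_H a hxH, hθ, map_smul]⟩

theorem phiA_succ_mem_eigenH {a : Fin 3} {ε : ℝ} {x : V} (hx : x ∈ S.eigenH a ε) :
    S.phiA (a + 1) x ∈ S.eigenH a (-ε) := by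
  obtain ⟨hxH, hθ⟩ := S.mem_eigenH_iff.1 hx
  refine S.mem_eigenH_iff.2 ⟨S.phiA_mem_H _ hxH, ?_⟩
  rw [S.theta_phiA_succ_of_mem_H a hxH, hθ, map_smul, neg_smul]

variable {a : Fin 3} {ε : ℝ} {U W : V}

theorem eq_zero_of_inner_eq_zero (hW : W ∈ S.eigenH a (-ε)) (hWn : ‖W‖ = 1)
    (h : ∀ Z ∈ S.eigenH a ε, ⟪Z, U⟫ = 0 →
      ∀ Y ∈ S.eigenH a (-ε), ⟪Y, W⟫ = 0 → ⟪S.phiA (a + 1) Z, Y⟫ = 0)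
    {Z : V} (hZ : Z ∈ S.eigenH a ε) (hZU : ⟪Z, U⟫ = 0) (hZφU : ⟪Z, S.phi U⟫ = 0) : Z = 0 := by
  have hφ := S.isAlmostContactMetric_phi
  have hZH := (S.mem_eigenH_iff.1 hZ).1
  have hξW := (S.mem_H_iff.1 (S.mem_eigenH_iff.1 hW).1).1
  have hWW : ⟪W, W⟫ = 1 := by rw [real_inner_self_eq_norm_sq, hWn, one_pow]
  have hline : ∀ X ∈ S.eigenH a ε, ⟪X, U⟫ = 0 →
      S.phiA (a + 1) X = ⟪S.phiA (a + 1) X, W⟫ • W := fun X hX hXU =>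
    eq_inner_smul_of_forall_inner_eq_zero hW hWW (S.phiA_succ_mem_eigenH hX) (h X hX hXU)
  have hφZU : ⟪S.phi Z, U⟫ = 0 := by rw [hφ.inner_apply_left, hZφU, neg_zero]
  have key : ⟪S.phiA (a + 1) Z, W⟫ • S.phi W = ⟪S.phiA (a + 1) (S.phi Z), W⟫ • W := by
    rw [← map_smul, ← hline Z hZ hZU, S.phi_phiA_of_mem_H _ hZH,
      ← hline _ (S.phi_mem_eigenH hZ) hφZU]
  have hc : ⟪S.phiA (a + 1) Z, W⟫ = 0 := by
    calc ⟪S.phiA (a + 1) Z, W⟫ = ⟪⟪S.phiA (a + 1) Z, W⟫ • S.phi W, S.phi W⟫ := by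
          rw [real_inner_smul_left, hφ.inner_apply_self_apply hξW, hWW, mul_one]
      _ = ⟪⟪S.phiA (a + 1) (S.phi Z), W⟫ • W, S.phi W⟫ := by rw [key]
      _ = 0 := by rw [real_inner_smul_left, hφ.inner_self_apply, mul_zero]
  refine (S.isAlmostContactMetric_phiA (a + 1)).eq_zero_of_apply_eq_zero
    ((S.mem_H_iff.1 hZH).2.1 _) ?_
  rw [hline Z hZ hZU, hc, zero_smul]

theorem eigenH_eq_span (hU : U ∈ S.eigenH a ε) (hUn : ‖U‖ = 1)
    (hW : W ∈ S.eigenH a (-ε)) (hWn : ‖W‖ = 1)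
    (h : ∀ Z ∈ S.eigenH a ε, ⟪Z, U⟫ = 0 →
      ∀ Y ∈ S.eigenH a (-ε), ⟪Y, W⟫ = 0 → ⟪S.phiA (a + 1) Z, Y⟫ = 0) :
    S.eigenH a ε = span ℝ {U, S.phi U} := by
  have hφ := S.isAlmostContactMetric_phi
  have hUU : ⟪U, U⟫ = 1 := by rw [real_inner_self_eq_norm_sq, hUn, one_pow]
  have hξU := (S.mem_H_iff.1 (S.mem_eigenH_iff.1 hU).1).1
  exact eq_span_pair_of_forall_inner_eq_zero hU (S.phi_mem_eigenH hU) hUU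
    (by rw [hφ.inner_apply_self_apply hξU, hUU]) (hφ.inner_self_apply U)
    fun Z hZ => S.eq_zero_of_inner_eq_zero hW hWn h hZ

theorem finrank_span_phi {X : V} (hX : X ∈ S.H) (hXn : ‖X‖ = 1) :
    Module.finrank ℝ (span ℝ {X, S.phi X}) = 2 := by
  have hφ := S.isAlmostContactMetric_phi
  have hXX : ⟪X, X⟫ = 1 := by rw [real_inner_self_eq_norm_sq, hXn, one_pow]
  exact finrank_span_pair_eq_two hXX
    (by rw [hφ.inner_apply_self_apply (S.mem_H_iff.1 hX).1, hXX]) (hφ.inner_self_apply X)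

end ACMS3

theorem eigenH_dim_two_general (S : ACMS3 V) (U W : V)
    (hU : U ∈ S.eigenH 0 1) (hUn : ‖U‖ = 1)
    (hW : W ∈ S.eigenH 0 (-1)) (hWn : ‖W‖ = 1)
    (h : ∀ a : Fin 3, (a = 1 ∨ a = 2) →
      ∀ Z ∈ S.eigenH 0 1, ⟪Z, U⟫ = 0 →
        ∀ Y ∈ S.eigenH 0 (-1), ⟪Y, W⟫ = 0 → ⟪S.phiA a Z, Y⟫ = 0) :
    Module.finrank ℝ (S.eigenH 0 1) = 2 ∧ Module.finrank ℝ (S.eigenH 0 (-1)) = 2 ∧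
    S.eigenH 0 1 = Submodule.span ℝ {U, S.phi U} ∧
    S.eigenH 0 (-1) = Submodule.span ℝ {W, S.phi W} := by
  have hP : S.eigenH 0 1 = span ℝ {U, S.phi U} :=
    S.eigenH_eq_span hU hUn hW hWn (h 1 (.inl rfl))
  have hN : S.eigenH 0 (-1) = span ℝ {W, S.phi W} := by
    refine S.eigenH_eq_span hW hWn (by rwa [neg_neg]) hUn fun Y hY hYW Z hZ hZU => ?_
    rw [neg_neg] at hZ
    rw [(S.isAlmostContactMetric_phiA _).inner_apply_left, real_inner_comm]
    exact neg_eq_zero.2 (h 1 (.inl rfl) Z hZ hZU Y hY hYW)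
  exact ⟨hP ▸ S.finrank_span_phi (S.mem_eigenH_iff.1 hU).1 hUn,
    hN ▸ S.finrank_span_phi (S.mem_eigenH_iff.1 hW).1 hWn, hP, hN⟩

/-- Suppose there exist unit vectors `U ∈ H₁(1)` and `W ∈ H₁(−1)` such that for
each `a ∈ {2,3}`, `⟨φ_a Z, Y⟩ = 0` for all `Z ∈ H₁(1)` orthogonal to `U` and all `Y ∈ H₁(−1)`
orthogonal to `W`.  Then `dim H₁(1) = dim H₁(−1) = 2`; more precisely `H₁(1) = span{U, φU}`
and `H₁(−1) = span{W, φW}`. -/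
theorem eigenH_dim_two [FiniteDimensional ℝ V] (S : ACMS3 V) (U W : V)
    (hU : U ∈ S.eigenH 0 1) (hUn : ‖U‖ = 1)
    (hW : W ∈ S.eigenH 0 (-1)) (hWn : ‖W‖ = 1)
    (h : ∀ a : Fin 3, (a = 1 ∨ a = 2) →
      ∀ Z ∈ S.eigenH 0 1, ⟪Z, U⟫ = 0 →
        ∀ Y ∈ S.eigenH 0 (-1), ⟪Y, W⟫ = 0 → ⟪S.phiA a Z, Y⟫ = 0) :
    Module.finrank ℝ (S.eigenH 0 1) = 2 ∧ Module.finrank ℝ (S.eigenH 0 (-1)) = 2 ∧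
    S.eigenH 0 1 = Submodule.span ℝ {U, S.phi U} ∧
    S.eigenH 0 (-1) = Submodule.span ℝ {W, S.phi W} :=
  eigenH_dim_two_general S U W hU hUn hW hWn h
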